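/- arXiv:2409.10257 — 3 statements merged into one kernel-verified Lean document; each statement's English description precedes it below -/
import Mathlib

section
/- For every p ∈ ℝ^m, the family of functions (z ↦ K̃(p+q, z))_{q ∈ Q}, indexed over Q = {−2π/3, 0, 2π/3}^m, is linearly independent in the real vector space of functions ℝ^m → ℝ. -/
open MeasureTheory Real Finset

noncomputable section

/-- `Ω = {-1,0,1}^m` as a finite set of integer vectors. -/
def Omega (m : ℕ) : Finset (Fin m → ℤ) := Finset.Icc (-1) 1

/-- `ωᵀz = ∑ j, ω j * z j`. -/
def dotIZ {m : ℕ} (ω : Fin m → ℤ) (z : Fin m → ℝ) : ℝ := ∑ j, (ω j : ℝ) * z j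

/-- A function `g : ℝ^m → ℝ` lies in `H` if it has a Fourier representation with
frequencies in `Ω = {-1,0,1}^m` and coefficients satisfying `c (-ω) = conj (c ω)`. -/
def IsInH (m : ℕ) (g : (Fin m → ℝ) → ℝ) : Prop :=
  ∃ c : (Fin m → ℤ) → ℂ,
    (∀ ω ∈ Omega m, c (-ω) = starRingEnd ℂ (c ω)) ∧
    ∀ z : Fin m → ℝ, (g z : ℂ) =
      ∑ ω ∈ Omega m, c ω * Complex.exp (Complex.I * ((dotIZ ω z : ℝ) : ℂ))

/-- The kernel `K̃(x,z) = ∏ j, (1 + 2 cos (x j - z j)) / 3`. -/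
def Ktilde (m : ℕ) (x z : Fin m → ℝ) : ℝ :=
  ∏ j, (1 + 2 * Real.cos (x j - z j)) / 3

/-- The grid `Q = {-2π/3, 0, 2π/3}^m` as a finite set of real vectors. -/
def Qgrid (m : ℕ) : Finset (Fin m → ℝ) :=
  (Omega m).image (fun ω j => 2 * π / 3 * (ω j : ℝ))

/-- The set of points of `Q` having at most `L` non-zero entries. -/
def QgridL (m L : ℕ) : Finset (Fin m → ℝ) :=
  (Qgrid m).filter (fun q => (Finset.univ.filter (fun j => q j ≠ 0)).card ≤ L)

/-- The cube `[-π, π]^m`. -/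
def cube (m : ℕ) : Set (Fin m → ℝ) := Set.pi Set.univ fun _ : Fin m => Set.Icc (-π) π

lemma cos_two_pi_div_three' : Real.cos (2 * π / 3) = -(1/2) := by
  have h : 2 * π / 3 = π - π / 3 := by ring
  rw [h, Real.cos_pi_sub, Real.cos_pi_div_three]

lemma cos_four_pi_div_three' : Real.cos (4 * π / 3) = -(1/2) := by
  have h : 4 * π / 3 = π + π / 3 := by ring
  rw [h, Real.cos_add, Real.cos_pi, Real.sin_pi, Real.cos_pi_div_three]
  ring

lemma factor_eq {a b : ℝ} (ha : a = -(2*π/3) ∨ a = 0 ∨ a = 2*π/3)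
    (hb : b = -(2*π/3) ∨ b = 0 ∨ b = 2*π/3) :
    (1 + 2 * Real.cos (a - b)) / 3 = if a = b then 1 else 0 := by
  have hpi := Real.pi_pos
  rcases ha with h|h|h <;> rcases hb with h'|h'|h' <;> subst h <;> subst h'
  · rw [if_pos rfl, sub_self, Real.cos_zero]; norm_num
  · rw [if_neg (by nlinarith), show -(2*π/3) - 0 = -(2*π/3) by ring,
      Real.cos_neg, cos_two_pi_div_three']; ring
  · rw [if_neg (by nlinarith), show -(2*π/3) - 2*π/3 = -(4*π/3) by ring,
      Real.cos_neg, cos_four_pi_div_three']; ring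
  · rw [if_neg (by nlinarith), show (0:ℝ) - -(2*π/3) = 2*π/3 by ring,
      cos_two_pi_div_three']; ring
  · rw [if_pos rfl, sub_self, Real.cos_zero]; norm_num
  · rw [if_neg (by nlinarith), show (0:ℝ) - 2*π/3 = -(2*π/3) by ring,
      Real.cos_neg, cos_two_pi_div_three']; ring
  · rw [if_neg (by nlinarith), show 2*π/3 - -(2*π/3) = 4*π/3 by ring,
      cos_four_pi_div_three']; ring
  · rw [if_neg (by nlinarith), show 2*π/3 - 0 = 2*π/3 by ring,
      cos_two_pi_div_three']; ring
  · rw [if_pos rfl, sub_self, Real.cos_zero]; norm_num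

lemma mem_Qgrid_cases {m : ℕ} {q : Fin m → ℝ} (hq : q ∈ Qgrid m) (j : Fin m) :
    q j = -(2*π/3) ∨ q j = 0 ∨ q j = 2*π/3 := by
  simp only [Qgrid, Omega, Finset.mem_image] at hq
  obtain ⟨ω, hω, rfl⟩ := hq
  rw [Finset.mem_Icc] at hω
  have h1 : (-1 : ℤ) ≤ ω j := hω.1 j
  have h2 : ω j ≤ 1 := hω.2 j
  interval_cases h : ω j <;> simp [h] <;> ring_nf

lemma Ktilde_delta {m : ℕ} (p : Fin m → ℝ) {q q' : Fin m → ℝ}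
    (hq : q ∈ Qgrid m) (hq' : q' ∈ Qgrid m) :
    Ktilde m (p + q) (p + q') = if q = q' then 1 else 0 := by
  unfold Ktilde
  have hfac : ∀ j : Fin m, (1 + 2 * Real.cos ((p+q) j - (p+q') j)) / 3
      = if q j = q' j then 1 else 0 := by
    intro j
    have h : (p+q) j - (p+q') j = q j - q' j := by simp [Pi.add_apply]
    rw [h]
    exact factor_eq (mem_Qgrid_cases hq j) (mem_Qgrid_cases hq' j)
  rw [Finset.prod_congr rfl (fun j _ => hfac j)]
  by_cases h : q = q'
  · simp [h]
  · rw [if_neg h]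
    obtain ⟨j, hj⟩ := Function.ne_iff.mp h
    exact Finset.prod_eq_zero (Finset.mem_univ j) (if_neg hj)

theorem stmt_6 (m : ℕ) (hm : 0 < m) (p : Fin m → ℝ) :
    LinearIndependent ℝ
      (fun q : (Qgrid m : Finset (Fin m → ℝ)) =>
        (fun z : Fin m → ℝ => Ktilde m (p + (q : Fin m → ℝ)) z)) := by
  rw [Fintype.linearIndependent_iff]
  intro g hg i
  have h := congrFun hg (p + (i : Fin m → ℝ))
  simp only [Finset.sum_apply, Pi.smul_apply, smul_eq_mul, Pi.zero_apply] at h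
  have hrw : ∀ j : (Qgrid m : Finset (Fin m → ℝ)),
      g j * Ktilde m (p + (j : Fin m → ℝ)) (p + (i : Fin m → ℝ))
        = if j = i then g j else 0 := by
    intro j
    rw [Ktilde_delta p j.2 i.2]
    by_cases hji : j = i
    · simp [hji]
    · rw [if_neg (fun hc => hji (Subtype.ext hc)), if_neg hji, mul_zero]
  rw [Finset.sum_congr rfl (fun j _ => hrw j)] at h
  simpa using h
end
end

section
/- (Solvability of the kernel interpolation system) Let D be a positive integer, let p_1, …, p_D ∈ ℝ^m be arbitrary points, and let g : ℝ^m → ℝ lie in H. Then there exists η ∈ ℝ^D such that Σ_{j=1}^D K̃(p_i, p_j)·η_j = g(p_i) for every i ∈ {1, …, D}. -/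
open MeasureTheory Real Finset

noncomputable section

open Matrix
open scoped ComplexOrder

lemma Omega_eq_piFinset (m : ℕ) :
    Omega m = Fintype.piFinset (fun _ : Fin m => ({-1, 0, 1} : Finset ℤ)) := by
  ext ω
  simp only [Omega, Finset.mem_Icc, Fintype.mem_piFinset, Finset.mem_insert,
    Finset.mem_singleton, Pi.le_def]
  constructor
  · rintro ⟨h1, h2⟩ j; have := h1 j; have := h2 j
    simp only [Pi.neg_apply, Pi.one_apply] at *; omega
  · intro h
    refine ⟨fun j => ?_, fun j => ?_⟩ <;> (have := h j; simp only [Pi.neg_apply, Pi.one_apply]; omega)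

lemma factor_eq_s8 (t : ℝ) :
    ((1 : ℂ) + 2 * Real.cos t) =
      ∑ k ∈ ({-1, 0, 1} : Finset ℤ), Complex.exp (Complex.I * ((k : ℝ) * t : ℝ)) := by
  rw [Finset.sum_insert (by decide), Finset.sum_insert (by decide), Finset.sum_singleton]
  push_cast
  rw [Complex.cos]
  ring_nf
  simp [Complex.exp_zero]
  ring_nf

lemma conj_exp_I_real (r : ℝ) :
    starRingEnd ℂ (Complex.exp (Complex.I * (r : ℂ))) =
      Complex.exp (-(Complex.I * (r : ℂ))) := by
  rw [← Complex.exp_conj, _root_.map_mul, Complex.conj_I, Complex.conj_ofReal, neg_mul]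

lemma kernel_expand (m : ℕ) (x z : Fin m → ℝ) :
    (3 : ℂ) ^ m * (Ktilde m x z : ℝ) =
      ∑ ω ∈ Omega m, Complex.exp (Complex.I * ((dotIZ ω x : ℝ) : ℂ)) *
        starRingEnd ℂ (Complex.exp (Complex.I * ((dotIZ ω z : ℝ) : ℂ))) := by
  have h1 : ((Ktilde m x z : ℝ) : ℂ) = ∏ j, ((1 + 2 * Real.cos (x j - z j) : ℝ) : ℂ) / 3 := by
    rw [Ktilde, Complex.ofReal_prod]
    exact Finset.prod_congr rfl fun j _ => by push_cast; ring
  rw [h1]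
  have h2 : (∏ j, ((1 + 2 * Real.cos (x j - z j) : ℝ) : ℂ) / 3) =
      (∏ j, ((1 + 2 * Real.cos (x j - z j) : ℝ) : ℂ)) / 3 ^ m := by
    rw [Finset.prod_div_distrib, Finset.prod_const, Finset.card_univ, Fintype.card_fin]
  rw [h2, mul_div_cancel₀ _ (pow_ne_zero m (by norm_num))]
  have h3 : ∀ j : Fin m, ((1 + 2 * Real.cos (x j - z j) : ℝ) : ℂ) =
      ∑ k ∈ ({-1, 0, 1} : Finset ℤ), Complex.exp (Complex.I * ((k : ℝ) * (x j - z j) : ℝ)) := by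
    intro j
    rw [Complex.ofReal_add, Complex.ofReal_mul, Complex.ofReal_one, Complex.ofReal_ofNat]
    exact factor_eq_s8 _
  rw [Finset.prod_congr rfl (fun j _ => h3 j), Finset.prod_univ_sum, Omega_eq_piFinset]
  refine Finset.sum_congr rfl fun ω _ => ?_
  rw [conj_exp_I_real, ← Complex.exp_sum, ← Complex.exp_add]
  congr 1
  push_cast [dotIZ]
  rw [← Finset.mul_sum, ← mul_neg, ← mul_add]
  congr 1
  rw [← Finset.sum_neg_distrib, ← Finset.sum_add_distrib]
  exact Finset.sum_congr rfl fun j _ => by ring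

lemma range_mul_conjTranspose {D : ℕ} {n : Type*} [Fintype n] [DecidableEq n]
    (A : Matrix (Fin D) n ℂ) :
    LinearMap.range (A * Aᴴ).mulVecLin = LinearMap.range A.mulVecLin := by
  refine Submodule.eq_of_le_of_finrank_eq ?_ ?_
  · rw [Matrix.mulVecLin_mul]
    exact LinearMap.range_comp_le_range _ _
  · exact Matrix.rank_self_mul_conjTranspose A

theorem stmt_8 (m : ℕ) (hm : 0 < m) (D : ℕ) (hD : 0 < D)
    (p : Fin D → (Fin m → ℝ)) (g : (Fin m → ℝ) → ℝ) (hg : IsInH m g) :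
    ∃ η : Fin D → ℝ, ∀ i : Fin D, ∑ j, Ktilde m (p i) (p j) * η j = g (p i) := by
  classical
  obtain ⟨c, -, hc⟩ := hg
  set A : Matrix (Fin D) ↥(Omega m) ℂ :=
    fun i ω => Complex.exp (Complex.I * ((dotIZ ω.1 (p i) : ℝ) : ℂ)) with hA
  have hbA : A.mulVec (fun ω => c ω.1) = fun i => (g (p i) : ℂ) := by
    funext i
    rw [hc (p i), Matrix.mulVec, ← Finset.sum_coe_sort (Omega m)]
    exact Finset.sum_congr rfl fun ω _ => mul_comm _ _
  have hbmem : (fun i => (g (p i) : ℂ)) ∈ LinearMap.range (A * Aᴴ).mulVecLin := by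
    rw [range_mul_conjTranspose]
    exact ⟨fun ω => c ω.1, hbA⟩
  obtain ⟨w, hw⟩ := hbmem
  have hK : ∀ i j, (A * Aᴴ) i j = ((3 ^ m * Ktilde m (p i) (p j) : ℝ) : ℂ) := by
    intro i j
    rw [Matrix.mul_apply]
    push_cast
    rw [kernel_expand m (p i) (p j), ← Finset.sum_coe_sort (Omega m)]
    exact Finset.sum_congr rfl fun ω _ => by rw [hA]; rfl
  refine ⟨fun j => 3 ^ m * (w j).re, fun i => ?_⟩
  have h1 : ((A * Aᴴ).mulVec w i).re = (g (p i) : ℂ).re := by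
    rw [Matrix.mulVecLin_apply] at hw
    rw [hw]
  rw [Matrix.mulVec] at h1
  have h2 : (dotProduct ((A * Aᴴ) i) w).re
      = ∑ j, (3 ^ m * Ktilde m (p i) (p j)) * (w j).re := by
    rw [dotProduct, Complex.re_sum]
    refine Finset.sum_congr rfl fun j _ => ?_
    rw [hK i j, Complex.re_ofReal_mul]
  rw [h2] at h1
  simp only [Complex.ofReal_re] at h1
  rw [← h1]
  exact Finset.sum_congr rfl fun j _ => by ring
end
end

section
/- (Local approximation error bound) Let g : ℝ^m → ℝ lie in H, let p ∈ ℝ^m, and let L be an integer with 1 ≤ L ≤ m. Let Q_L be the set of q ∈ {−2π/3, 0, 2π/3}^m with at most L non-zero entries, and define g̃ : ℝ^m → ℝ by g̃(θ) = Σ_{q ∈ Q_L} g(p + q)·K̃(p + q, θ). Then there exists a constant C ≥ 0 such that for all ϑ ∈ ℝ^m with ‖ϑ‖ ≤ 1 (Euclidean norm), |g(p + ϑ) − g̃(p + ϑ)| ≤ C·‖ϑ‖^{L+1}. -/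
open MeasureTheory Real Finset

noncomputable section

set_option maxHeartbeats 2000000

/-- One-dimensional quadrature identity for characters `e^{i s x}` with `s ∈ {-1,0,1}`. -/
lemma keyB (a t : ℂ) (s : ℤ) (hs : s ∈ Finset.Icc (-1:ℤ) 1) :
    ∑ k ∈ Finset.Icc (-1:ℤ) 1, ((1 + 2*Complex.cos ((a + 2*(π:ℂ)/3*(k:ℤ)) - t))/3)
      * Complex.exp (Complex.I * ((s:ℂ)*(a + 2*(π:ℂ)/3*(k:ℤ)))) =
    Complex.exp (Complex.I * ((s:ℂ)*t)) := by
  have hW3 : (Complex.exp (↑π * Complex.I * (2/3)))^3 = 1 := by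
    rw [← Complex.exp_nat_mul]
    rw [show (3:ℕ) * (↑π * Complex.I * (2/3)) = 2*π*Complex.I by push_cast; ring]
    exact Complex.exp_two_pi_mul_I
  have hWne : Complex.exp (↑π * Complex.I * (2/3)) ≠ 0 := Complex.exp_ne_zero _
  have hWneg : Complex.exp (↑π * Complex.I * (-2/3)) = (Complex.exp (↑π * Complex.I * (2/3)))^2 := by
    have h1 : Complex.exp (↑π * Complex.I * (-2/3)) * Complex.exp (↑π * Complex.I * (2/3)) = 1 := by
      rw [← Complex.exp_add]; ring_nf; exact Complex.exp_zero
    rw [eq_inv_of_mul_eq_one_left h1]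
    rw [inv_eq_of_mul_eq_one_right (show Complex.exp (↑π * Complex.I * (2/3)) * (Complex.exp (↑π * Complex.I * (2/3)))^2 = 1 by linear_combination hW3)]
  have hWsum : 1 + Complex.exp (↑π * Complex.I * (2/3)) + (Complex.exp (↑π * Complex.I * (2/3)))^2 = 0 := by
    have hne1 : Complex.exp (↑π * Complex.I * (2/3)) ≠ 1 := by
      rw [show (↑π * Complex.I * (2/3) : ℂ) = ((2*π/3 : ℝ) : ℂ) * Complex.I by push_cast; ring,
        Complex.exp_mul_I, ← Complex.ofReal_cos, ← Complex.ofReal_sin]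
      intro h
      have h2 := congrArg Complex.re h
      simp only [Complex.add_re, Complex.ofReal_re, Complex.mul_re, Complex.ofReal_im,
        Complex.I_re, Complex.I_im, Complex.one_re] at h2
      rw [show (2*π/3 : ℝ) = π - π/3 by ring, Real.cos_pi_sub, Real.cos_pi_div_three] at h2
      norm_num at h2
    have h : (Complex.exp (↑π * Complex.I * (2/3)) - 1) * (1 + Complex.exp (↑π * Complex.I * (2/3)) + (Complex.exp (↑π * Complex.I * (2/3)))^2) = 0 := by
      linear_combination hW3
    rcases mul_eq_zero.1 h with h1 | h1
    · exact absurd (by linear_combination h1) hne1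
    · exact h1
  rw [show Finset.Icc (-1:ℤ) 1 = {-1,0,1} from rfl] at hs ⊢
  rw [Finset.sum_insert (by decide), Finset.sum_insert (by decide), Finset.sum_singleton]
  have hAne : Complex.exp (a * Complex.I) ≠ 0 := Complex.exp_ne_zero _
  have hTne : Complex.exp (t * Complex.I) ≠ 0 := Complex.exp_ne_zero _
  fin_cases hs
  · -- s = -1
    push_cast
    rw [Complex.two_cos, Complex.two_cos, Complex.two_cos]
    ring_nf
    simp only [Complex.exp_add, Complex.exp_sub, Complex.exp_neg, Complex.exp_zero, hWneg]
    set W := Complex.exp (↑π * Complex.I * (2/3)) with hW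
    set A := Complex.exp (a * Complex.I) with hA
    set T := Complex.exp (t * Complex.I) with hT
    linear_combination (A⁻¹/3 + A⁻¹^2*T/3) * hWsum + (A⁻¹^2*T*W/3 + 2/3*A*A⁻¹/T) * hW3 + (1/T) * (mul_inv_cancel₀ hAne)
  · -- s = 0
    push_cast
    rw [Complex.two_cos, Complex.two_cos, Complex.two_cos]
    ring_nf
    simp only [Complex.exp_add, Complex.exp_sub, Complex.exp_neg, Complex.exp_zero, hWneg]
    set W := Complex.exp (↑π * Complex.I * (2/3)) with hW
    set A := Complex.exp (a * Complex.I) with hA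
    set T := Complex.exp (t * Complex.I) with hT
    linear_combination (A/T/3 + A⁻¹*T/3) * hWsum
  · -- s = 1
    push_cast
    rw [Complex.two_cos, Complex.two_cos, Complex.two_cos]
    ring_nf
    simp only [Complex.exp_add, Complex.exp_sub, Complex.exp_neg, Complex.exp_zero, hWneg]
    set W := Complex.exp (↑π * Complex.I * (2/3)) with hW
    set A := Complex.exp (a * Complex.I) with hA
    set T := Complex.exp (t * Complex.I) with hT
    linear_combination (A/3 + A^2/T/3) * hWsum + (A^2*W/T/3 + 2/3*A*A⁻¹*T) * hW3 + T * (mul_inv_cancel₀ hAne)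

lemma omega_pi (m : ℕ) : Omega m = Fintype.piFinset (fun _ : Fin m => Finset.Icc (-1:ℤ) 1) := by
  rw [Omega, Pi.Icc_eq]
  rfl

/-- Quadrature exactness for the characters indexed by `ω ∈ Ω`. -/
lemma exact_char (m : ℕ) (p x : Fin m → ℝ) (ω : Fin m → ℤ) (hω : ω ∈ Omega m) :
    ∑ q ∈ Qgrid m, ((Ktilde m (p + q) x : ℝ) : ℂ)
        * Complex.exp (Complex.I * ((dotIZ ω (p + q) : ℝ) : ℂ))
      = Complex.exp (Complex.I * ((dotIZ ω x : ℝ) : ℂ)) := by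
  have hinj : Set.InjOn (fun (ω : Fin m → ℤ) (j : Fin m) => 2 * π / 3 * (ω j : ℝ)) (Omega m) := by
    intro u _ v _ h
    funext j
    have := congrFun h j
    simp only at this
    have hπ : 2 * π / 3 ≠ 0 := by positivity
    have h2 : (u j : ℝ) = (v j : ℝ) := mul_left_cancel₀ hπ this
    exact_mod_cast h2
  rw [Qgrid, Finset.sum_image hinj]
  have step : ∀ ω' ∈ Omega m,
      ((Ktilde m (p + fun j => 2*π/3*(ω' j : ℝ)) x : ℝ) : ℂ)
        * Complex.exp (Complex.I * ((dotIZ ω (p + fun j => 2*π/3*(ω' j : ℝ)) : ℝ) : ℂ))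
      = ∏ j, (((1 + 2*Complex.cos ((((p j : ℝ):ℂ) + 2*(π:ℂ)/3*((ω' j : ℤ):ℂ)) - ((x j : ℝ):ℂ)))/3)
          * Complex.exp (Complex.I * (((ω j : ℤ):ℂ)*(((p j :ℝ):ℂ) + 2*(π:ℂ)/3*((ω' j : ℤ):ℂ))))) := by
    intro ω' _
    rw [Ktilde, dotIZ]
    push_cast
    rw [Finset.mul_sum, Complex.exp_sum, ← Finset.prod_mul_distrib]
    congr 1
    funext j
    simp only [Pi.add_apply]
    push_cast
    ring_nf
  rw [Finset.sum_congr rfl step]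
  rw [omega_pi]
  rw [← Finset.prod_univ_sum (fun _ : Fin m => Finset.Icc (-1:ℤ) 1)
    (fun j k => (((1 + 2*Complex.cos ((((p j : ℝ):ℂ) + 2*(π:ℂ)/3*((k : ℤ):ℂ)) - ((x j : ℝ):ℂ)))/3)
          * Complex.exp (Complex.I * (((ω j : ℤ):ℂ)*(((p j :ℝ):ℂ) + 2*(π:ℂ)/3*((k : ℤ):ℂ))))))]
  have hj : ∀ j : Fin m,
      (∑ k ∈ Finset.Icc (-1:ℤ) 1, (((1 + 2*Complex.cos ((((p j : ℝ):ℂ) + 2*(π:ℂ)/3*((k : ℤ):ℂ)) - ((x j : ℝ):ℂ)))/3)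
          * Complex.exp (Complex.I * (((ω j : ℤ):ℂ)*(((p j :ℝ):ℂ) + 2*(π:ℂ)/3*((k : ℤ):ℂ))))))
      = Complex.exp (Complex.I * (((ω j : ℤ):ℂ) * ((x j : ℝ):ℂ))) := by
    intro j
    apply keyB
    rw [Omega, Finset.mem_Icc] at hω
    rw [Finset.mem_Icc]
    exact ⟨hω.1 j, hω.2 j⟩
  rw [Finset.prod_congr rfl (fun j _ => hj j)]
  rw [← Complex.exp_sum, dotIZ]
  congr 1
  push_cast
  rw [Finset.mul_sum]

/-- The kernel quadrature on the full grid reproduces every `g ∈ H` exactly. -/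
lemma reproducing (m : ℕ) (g : (Fin m → ℝ) → ℝ) (hg : IsInH m g) (p x : Fin m → ℝ) :
    ∑ q ∈ Qgrid m, g (p + q) * Ktilde m (p + q) x = g x := by
  obtain ⟨c, -, hrep⟩ := hg
  have key : ((∑ q ∈ Qgrid m, g (p + q) * Ktilde m (p + q) x : ℝ) : ℂ) = ((g x : ℝ) : ℂ) := by
    push_cast
    calc ∑ q ∈ Qgrid m, (g (p+q) : ℂ) * (Ktilde m (p+q) x : ℂ)
        = ∑ q ∈ Qgrid m, (∑ ω ∈ Omega m, c ω *
            (((Ktilde m (p+q) x : ℝ):ℂ) * Complex.exp (Complex.I * ((dotIZ ω (p+q) : ℝ):ℂ)))) := by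
          refine Finset.sum_congr rfl fun q _ => ?_
          rw [hrep (p+q), Finset.sum_mul]
          refine Finset.sum_congr rfl fun ω _ => by ring
      _ = ∑ ω ∈ Omega m, c ω * (∑ q ∈ Qgrid m,
            ((Ktilde m (p+q) x : ℝ):ℂ) * Complex.exp (Complex.I * ((dotIZ ω (p+q) : ℝ):ℂ))) := by
          rw [Finset.sum_comm]
          exact Finset.sum_congr rfl fun ω _ => by rw [Finset.mul_sum]
      _ = ∑ ω ∈ Omega m, c ω * Complex.exp (Complex.I * ((dotIZ ω x : ℝ):ℂ)) := by
          refine Finset.sum_congr rfl fun ω hω => ?_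
          rw [exact_char m p x ω hω]
      _ = ((g x : ℝ) : ℂ) := (hrep x).symm
  exact_mod_cast key

lemma qgrid_vals (m : ℕ) (q : Fin m → ℝ) (hq : q ∈ Qgrid m) (j : Fin m) (hj : q j ≠ 0) :
    Real.cos (q j) = -(1/2) := by
  rw [Qgrid, Finset.mem_image] at hq
  obtain ⟨ω, hω, rfl⟩ := hq
  rw [Omega, Finset.mem_Icc] at hω
  have hk : ω j ≠ 0 := by
    intro h0
    apply hj
    show 2*π/3*((ω j : ℤ):ℝ) = 0
    rw [h0]; norm_num
  have h1 := hω.1 j; have h2 := hω.2 j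
  simp only [Pi.neg_apply, Pi.one_apply] at h1 h2
  show Real.cos (2*π/3*((ω j : ℤ):ℝ)) = -(1/2)
  have hval : Real.cos (2*π/3) = -(1/2) := by
    rw [show (2*π/3:ℝ) = π - π/3 by ring, Real.cos_pi_sub, Real.cos_pi_div_three]
  interval_cases h : (ω j)
  · rw [show ((( -1 :ℤ)):ℝ) = -1 by push_cast; ring]
    rw [show 2*π/3*(-1:ℝ) = -(2*π/3) by ring, Real.cos_neg]
    exact hval
  · exact absurd rfl hk
  · rw [show (((1:ℤ)):ℝ) = 1 by push_cast; ring]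
    rw [mul_one]
    exact hval

/-- Pointwise bound on the kernel for grid points with more than `L` non-zero entries. -/
lemma kernel_bound (m L : ℕ) (q ϑ : Fin m → ℝ) (hq : q ∈ Qgrid m)
    (hbad : L < (Finset.univ.filter (fun j => q j ≠ 0)).card)
    (hr1 : Real.sqrt (∑ j, ϑ j ^ 2) ≤ 1) :
    |Ktilde m q ϑ| ≤ 2^m * Real.sqrt (∑ j, ϑ j ^ 2) ^ (L+1) := by
  set r := Real.sqrt (∑ j, ϑ j ^ 2) with hrdef
  have hr0 : 0 ≤ r := Real.sqrt_nonneg _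
  have habs : ∀ j, |ϑ j| ≤ r := by
    intro j
    rw [hrdef, show |ϑ j| = Real.sqrt (ϑ j ^ 2) by rw [Real.sqrt_sq_eq_abs]]
    apply Real.sqrt_le_sqrt
    exact Finset.single_le_sum (fun i _ => sq_nonneg (ϑ i)) (Finset.mem_univ j)
  rw [Ktilde, Finset.abs_prod]
  calc ∏ j, |(1 + 2 * Real.cos (q j - ϑ j)) / 3|
      ≤ ∏ j, (if q j ≠ 0 then 2*r else 1) := by
        refine Finset.prod_le_prod (fun j _ => abs_nonneg _) (fun j _ => ?_)
        by_cases h : q j ≠ 0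
        · rw [if_pos h]
          have hcos := qgrid_vals m q hq j h
          have hlip : |Real.cos (q j - ϑ j) - Real.cos (q j)| ≤ |ϑ j| := by
            rw [Real.cos_sub_cos]
            rw [show (q j - ϑ j - q j) = -ϑ j by ring]
            calc |(-2) * Real.sin ((q j - ϑ j + q j)/2) * Real.sin (-ϑ j / 2)|
                = 2 * |Real.sin ((q j - ϑ j + q j)/2)| * |Real.sin (-ϑ j / 2)| := by
                  rw [abs_mul, abs_mul]; norm_num
              _ ≤ 2 * 1 * |(-ϑ j / 2)| := by
                  have hs1 : |Real.sin ((q j - ϑ j + q j)/2)| ≤ 1 := Real.abs_sin_le_one _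
                  have hs2 : |Real.sin (-ϑ j / 2)| ≤ |(-ϑ j / 2)| := Real.abs_sin_le_abs
                  nlinarith [abs_nonneg (Real.sin ((q j - ϑ j + q j)/2)),
                    abs_nonneg (Real.sin (-ϑ j /2)), abs_nonneg (-ϑ j/2)]
              _ = |ϑ j| := by
                  rw [abs_div, abs_neg, show |(2:ℝ)| = 2 by norm_num]; ring
          have hstep : |(1 + 2 * Real.cos (q j - ϑ j))/3| ≤ 2 * |ϑ j| / 3 := by
            have h1 : 1 + 2 * Real.cos (q j - ϑ j) =
                2 * (Real.cos (q j - ϑ j) - Real.cos (q j)) := by rw [hcos]; ring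
            rw [h1, abs_div, abs_mul]
            simp only [abs_two]
            rw [show |(3:ℝ)| = 3 by norm_num]
            nlinarith [abs_nonneg (Real.cos (q j - ϑ j) - Real.cos (q j))]
          calc |(1 + 2 * Real.cos (q j - ϑ j))/3| ≤ 2 * |ϑ j| / 3 := hstep
            _ ≤ 2 * r := by nlinarith [habs j]
        · rw [if_neg h]
          rw [abs_div, show |(3:ℝ)| = 3 by norm_num]
          rw [div_le_one (by norm_num)]
          have := Real.neg_one_le_cos (q j - ϑ j)
          have := Real.cos_le_one (q j - ϑ j)
          rw [abs_le]; constructor <;> nlinarith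
    _ = (2*r) ^ (Finset.univ.filter (fun j => q j ≠ 0)).card := by
        rw [Finset.prod_ite, Finset.prod_const, Finset.prod_const, one_pow, mul_one]
    _ ≤ 2^m * r^(L+1) := by
        set N := (Finset.univ.filter (fun j => q j ≠ 0)).card with hN
        have hNm : N ≤ m := by
          calc N ≤ (Finset.univ : Finset (Fin m)).card := Finset.card_filter_le _ _
            _ = m := by simp
        rw [mul_pow]
        have h2 : (2:ℝ)^N ≤ 2^m := pow_le_pow_right₀ (by norm_num) hNm
        have hrN : r^N ≤ r^(L+1) := pow_le_pow_of_le_one hr0 hr1 hbad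
        nlinarith [pow_nonneg hr0 N, pow_nonneg (show (0:ℝ) ≤ 2 by norm_num) N,
          pow_nonneg hr0 (L+1)]

theorem stmt_15 (m : ℕ) (g : (Fin m → ℝ) → ℝ) (hg : IsInH m g)
    (p : Fin m → ℝ) (L : ℕ) (hL : 1 ≤ L) (hLm : L ≤ m) :
    ∃ C : ℝ, 0 ≤ C ∧ ∀ ϑ : Fin m → ℝ, Real.sqrt (∑ j, ϑ j ^ 2) ≤ 1 →
      |g (p + ϑ) - ∑ q ∈ QgridL m L, g (p + q) * Ktilde m (p + q) (p + ϑ)| ≤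
        C * Real.sqrt (∑ j, ϑ j ^ 2) ^ (L + 1) := by
  refine ⟨2^m * ∑ q ∈ Qgrid m, |g (p + q)|, by positivity, fun ϑ hr1 => ?_⟩
  set r := Real.sqrt (∑ j, ϑ j ^ 2) with hrdef
  have hr0 : 0 ≤ r := Real.sqrt_nonneg _
  have hsub : QgridL m L ⊆ Qgrid m := Finset.filter_subset _ _
  have hrepr := reproducing m g hg p (p + ϑ)
  have hsplit : g (p + ϑ) - ∑ q ∈ QgridL m L, g (p + q) * Ktilde m (p + q) (p + ϑ)
      = ∑ q ∈ Qgrid m \ QgridL m L, g (p + q) * Ktilde m (p + q) (p + ϑ) := by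
    rw [← hrepr, eq_comm, Finset.sum_sdiff_eq_sub hsub]
  rw [hsplit]
  calc |∑ q ∈ Qgrid m \ QgridL m L, g (p + q) * Ktilde m (p + q) (p + ϑ)|
      ≤ ∑ q ∈ Qgrid m \ QgridL m L, |g (p + q) * Ktilde m (p + q) (p + ϑ)| :=
        Finset.abs_sum_le_sum_abs _ _
    _ ≤ ∑ q ∈ Qgrid m \ QgridL m L, |g (p + q)| * (2^m * r^(L+1)) := by
        refine Finset.sum_le_sum fun q hq => ?_
        rw [abs_mul]
        refine mul_le_mul_of_nonneg_left ?_ (abs_nonneg _)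
        rw [Finset.mem_sdiff, QgridL, Finset.mem_filter] at hq
        have hbad : L < (Finset.univ.filter (fun j => q j ≠ 0)).card := by
          by_contra h
          exact hq.2 ⟨hq.1, not_lt.mp h⟩
        have hK : Ktilde m (p + q) (p + ϑ) = Ktilde m q ϑ := by
          rw [Ktilde, Ktilde]
          refine Finset.prod_congr rfl fun j _ => ?_
          simp only [Pi.add_apply]
          ring_nf
        rw [hK]
        exact kernel_bound m L q ϑ hq.1 hbad hr1
    _ = (∑ q ∈ Qgrid m \ QgridL m L, |g (p + q)|) * (2^m * r^(L+1)) := by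
        rw [← Finset.sum_mul]
    _ ≤ (∑ q ∈ Qgrid m, |g (p + q)|) * (2^m * r^(L+1)) := by
        refine mul_le_mul_of_nonneg_right ?_ (by positivity)
        exact Finset.sum_le_sum_of_subset_of_nonneg (Finset.sdiff_subset)
          (fun q _ _ => abs_nonneg _)
    _ = 2^m * (∑ q ∈ Qgrid m, |g (p + q)|) * r^(L+1) := by ring
end
end
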